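/- Let N ≥ 2 be an even integer, set x_i = 2πi/N for i = 0, …, N−1, and for fixed i let B_i : ℝ → ℝ be the continuous extension (with value 1 at x_i + 2πk, k ∈ ℤ) of the function x ↦ (1/N)·sin(N(x − x_i)/2)·cot((x − x_i)/2). Then B_i is differentiable on ℝ and Σ_{n=0}^{N−1} B_i′(x_n) = 0. -/

import Mathlib

open Real Finset

/-!
For `N = 2M` the basis function is `B_i t = D_M (t - x_i) / N`, where
`D_M v = sin (M v) cot (v / 2) = 1 + 2 ∑_{k=1}^{M-1} cos (k v) + cos (M v)` is the modified
Dirichlet kernel, so `B_i` is a trigonometric polynomial of degree `M < N`. Its derivative is a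
combination of the `sin (k (t - x_i))` with `1 ≤ k ≤ M`, and each of these sums to zero over the
`N` nodes: it is the imaginary part of a geometric sum of the `N`-th root of unity `ζ ^ k ≠ 1`.
-/

theorem sum_sin_nat_mul_two_pi_div_add {N k : ℕ} (hk : ¬ N ∣ k) (a : ℝ) :
    ∑ n : Fin N, sin (k * (2 * π * n / N) + a) = 0 := by
  rcases Nat.eq_zero_or_pos N with rfl | hN
  · simp
  have hprim := Complex.isPrimitiveRoot_exp N hN.ne'
  set ζ := Complex.exp (2 * π * Complex.I / N)
  set z := ζ ^ k
  have hz : z ≠ 1 := by rwa [Ne, hprim.pow_eq_one_iff_dvd]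
  have hzN : z ^ N = 1 := by rw [← pow_mul, mul_comm, pow_mul, hprim.pow_eq_one, one_pow]
  have hgeom : ∑ n ∈ range N, z ^ n = 0 := by rw [geom_sum_eq hz, hzN, sub_self, zero_div]
  have hexp (n : ℕ) : Complex.exp (↑(k * (2 * π * n / N) + a) * Complex.I) =
      Complex.exp (a * Complex.I) * z ^ n := by
    rw [← pow_mul, ← Complex.exp_nat_mul, ← Complex.exp_add]
    congr 1
    push_cast
    ring
  calc ∑ n : Fin N, sin (k * (2 * π * n / N) + a)
      = (∑ n ∈ range N, Complex.exp ((k * (2 * π * n / N) + a : ℝ) * Complex.I)).im := by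
        simp only [Complex.im_sum, Complex.exp_ofReal_mul_I_im, Fin.sum_univ_eq_sum_range
          (fun n : ℕ => sin (k * (2 * π * n / N) + a))]
    _ = 0 := by simp only [hexp, ← mul_sum, hgeom, mul_zero, Complex.zero_im]

-- The `k = 0` term of the sum makes this `1 + 2 ∑_{k=1}^{M-1} cos (k v) + cos (M v)`
-- for `M ≥ 1`, while keeping the identities below valid for `M = 0` as well.
noncomputable def modifiedDirichletKernel (M : ℕ) (v : ℝ) : ℝ :=
  2 * ∑ k ∈ range M, cos (k * v) + cos (M * v) - 1

theorem sin_nat_mul_mul_cos_half (M : ℕ) (v : ℝ) :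
    sin (M * v) * cos (v / 2) = sin (v / 2) * modifiedDirichletKernel M v := by
  induction M with
  | zero => simp [modifiedDirichletKernel]
  | succ M ih =>
    simp only [modifiedDirichletKernel, sum_range_succ] at ih ⊢
    have hv : (↑(M + 1) : ℝ) * v = M * v + 2 * (v / 2) := by push_cast; ring
    rw [hv, sin_add, cos_add, sin_two_mul, cos_two_mul]
    linear_combination ih + 2 * cos (v / 2) * sin (M * v) * sin_sq_add_cos_sq (v / 2)

theorem sin_nat_mul_mul_cot_half (M : ℕ) {v : ℝ} (hv : sin (v / 2) ≠ 0) :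
    sin (M * v) * cot (v / 2) = modifiedDirichletKernel M v := by
  rw [cot_eq_cos_div_sin, mul_div_assoc', sin_nat_mul_mul_cos_half, mul_div_cancel_left₀ _ hv]

theorem modifiedDirichletKernel_int_mul_two_pi (M : ℕ) (m : ℤ) :
    modifiedDirichletKernel M (2 * π * m) = 2 * M := by
  have hcos (k : ℕ) : cos (k * (2 * π * m)) = 1 := by
    rw [show (k : ℝ) * (2 * π * m) = ((k * m : ℤ) : ℝ) * (2 * π) by push_cast; ring,
      cos_int_mul_two_pi]
  simp only [modifiedDirichletKernel, hcos, sum_const, card_range, nsmul_eq_mul, mul_one]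
  ring

theorem hasDerivAt_modifiedDirichletKernel (M : ℕ) (v : ℝ) :
    HasDerivAt (modifiedDirichletKernel M)
      (-(2 * ∑ k ∈ range M, k * sin (k * v) + M * sin (M * v))) v := by
  have hcos (k : ℕ) : HasDerivAt (fun v : ℝ => cos (k * v)) (-(k * sin (k * v))) v := by
    simpa [mul_comm] using ((hasDerivAt_id v).const_mul (k : ℝ)).cos
  have hsum := (HasDerivAt.fun_sum (u := range M) fun k _ => hcos k).const_mul 2
  exact ((hsum.fun_add (hcos M)).sub_const 1).congr_deriv (by simp only [sum_neg_distrib]; ring)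

theorem sum_deriv_modifiedDirichletKernel_two_pi_div_add {M N : ℕ} (hMN : M < N) (a : ℝ) :
    ∑ n : Fin N, deriv (modifiedDirichletKernel M) (2 * π * n / N + a) = 0 := by
  have hsin {k : ℕ} (hk : k ≤ M) : k * ∑ n : Fin N, sin (k * (2 * π * n / N + a)) = 0 := by
    rcases Nat.eq_zero_or_pos k with rfl | hk0
    · simp
    simp only [mul_add]
    rw [sum_sin_nat_mul_two_pi_div_add (Nat.not_dvd_of_pos_of_lt hk0 (by omega)), mul_zero]
  simp only [(hasDerivAt_modifiedDirichletKernel M _).deriv, sum_neg_distrib, sum_add_distrib,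
    ← mul_sum, sum_comm (γ := Fin N)]
  rw [hsin le_rfl, sum_eq_zero fun k hk => hsin (mem_range.1 hk).le]
  simp

theorem trig_diff_matrix_column_sum
    (N : ℕ) (hN : 2 ≤ N) (hNeven : Even N)
    (x : Fin N → ℝ) (hx : ∀ n : Fin N, x n = 2 * π * n / N)
    (i : Fin N) (B : ℝ → ℝ)
    (hB : ∀ t : ℝ, (∀ k : ℤ, t ≠ x i + 2 * π * k) →
      B t = (1 / N) * Real.sin (N * (t - x i) / 2) * Real.cot ((t - x i) / 2))
    (hB1 : ∀ k : ℤ, B (x i + 2 * π * k) = 1) :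
    Differentiable ℝ B ∧ ∑ n : Fin N, deriv B (x n) = 0 := by
  obtain ⟨M, rfl⟩ := hNeven
  have hM : (M : ℝ) ≠ 0 := Nat.cast_ne_zero.2 (by omega)
  have hBD : B = fun t => modifiedDirichletKernel M (t - x i) / (2 * M) := by
    funext t
    by_cases ht : ∃ k : ℤ, t = x i + 2 * π * k
    · obtain ⟨k, rfl⟩ := ht
      rw [hB1, add_sub_cancel_left, modifiedDirichletKernel_int_mul_two_pi,
        div_self (mul_ne_zero two_ne_zero hM)]
    · push Not at ht
      have hsin : sin ((t - x i) / 2) ≠ 0 := by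
        rw [Ne, sin_eq_zero_iff]
        rintro ⟨k, hk⟩
        exact ht k (by linarith)
      rw [hB t ht, ← sin_nat_mul_mul_cot_half M hsin]
      push_cast
      ring_nf
  have hD : Differentiable ℝ (modifiedDirichletKernel M) := fun v =>
    (hasDerivAt_modifiedDirichletKernel M v).differentiableAt
  refine ⟨hBD ▸ by fun_prop, ?_⟩
  simp only [hBD, deriv_div_const, deriv_comp_sub_const, ← sum_div]
  simp only [hx, sub_eq_add_neg]
  rw [sum_deriv_modifiedDirichletKernel_two_pi_div_add (by omega), zero_div]
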